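/- arXiv:1404.0484 — 3 statements merged into one kernel-verified Lean document; each statement's English description precedes it below -/
import Mathlib

section
/- Let n ≥ 2 and let i be the least index in {1, …, n} with d_n(i) = i. If n ≤ i + f(i) (i.e. the arc (v_i, v_n) is present in J_n(1)), then v_i is the prime Jaconian vertex of J_n(1); that is, Δ(J_n(1)) = i and i is the least element of 𝕁(J_n(1)). -/
/-- The Jaco out-degree function `f`: `f 0 = 0` and, for `n ≥ 1`,
`f n = n - #{k : 1 ≤ k < n ∧ k + f k ≥ n}` (the out-degree of `v_n` in `J_∞(1)`). -/
def jacoF : ℕ → ℕ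
  | 0 => 0
  | n + 1 =>
    (n + 1) - ((Finset.range (n + 1)).attach.filter
      (fun a => 1 ≤ a.1 ∧ n + 1 ≤ a.1 + jacoF a.1)).card
  decreasing_by all_goals exact Finset.mem_range.mp a.2

/-- The in-degree `d⁻(j) = #{i : 1 ≤ i < j ∧ j ≤ i + f i}` of `v_j` in `J_∞(1)`. -/
def jacoDin (j : ℕ) : ℕ := ((Finset.Ico 1 j).filter (fun i => j ≤ i + jacoF i)).card

/-- The degree `d_n(j) = d⁻(j) + #{k : j < k ≤ n ∧ k ≤ j + f j}` of `v_j` in the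
underlying undirected graph of the finite Jaco graph `J_n(1)`. -/
def jacoDeg (n j : ℕ) : ℕ :=
  jacoDin j + ((Finset.Ioc j n).filter (fun k => k ≤ j + jacoF j)).card

/-- The maximum degree `Δ(J_n(1)) = max_{1 ≤ j ≤ n} d_n(j)`. -/
def jacoDelta (n : ℕ) : ℕ := (Finset.Icc 1 n).sup (jacoDeg n)

/-- The Jaconian set `𝕁(J_n(1)) = {j : 1 ≤ j ≤ n ∧ d_n(j) = Δ(J_n(1))}`. -/
def jacoJ (n : ℕ) : Finset ℕ := (Finset.Icc 1 n).filter (fun j => jacoDeg n j = jacoDelta n)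

/-!
Since `d⁻(j) + f(j) = j`, the degree of `v_j` in `J_n(1)` is `min j (n - f j)`, and `f` is
monotone because `d⁻` grows by at most one per step. The hypotheses force `i + f i = n`;
then a vertex `j ≤ i` has degree at most `j`, and a vertex `j ≥ i` has `f j ≥ f i = n - i`,
hence degree at most `i`. So `Δ = i`, and a vertex of degree `i` cannot precede `v_i`.
-/

lemma jacoF_succ (n : ℕ) : jacoF (n + 1) = n + 1 - jacoDin (n + 1) := by
  rw [jacoF, jacoDin, Finset.filter_attach (fun a => 1 ≤ a ∧ n + 1 ≤ a + jacoF a),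
    Finset.card_map, Finset.card_attach]
  congr 2
  ext a
  simp only [Finset.mem_filter, Finset.mem_range, Finset.mem_Ico]
  tauto

lemma jacoDin_add_jacoF {j : ℕ} (hj : 1 ≤ j) : jacoDin j + jacoF j = j := by
  obtain ⟨m, rfl⟩ : ∃ m, j = m + 1 := ⟨j - 1, by omega⟩
  have hle : jacoDin (m + 1) ≤ m := by
    simpa [jacoDin] using
      Finset.card_filter_le (Finset.Ico 1 (m + 1)) fun i => m + 1 ≤ i + jacoF i
  rw [jacoF_succ]
  omega

lemma jacoDin_succ_le (j : ℕ) : jacoDin (j + 1) ≤ jacoDin j + 1 := by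
  have hsub : (Finset.Ico 1 (j + 1)).filter (fun i => j + 1 ≤ i + jacoF i) ⊆
      insert j ((Finset.Ico 1 j).filter (fun i => j ≤ i + jacoF i)) := by
    intro a ha
    simp only [Finset.mem_insert, Finset.mem_filter, Finset.mem_Ico] at ha ⊢
    omega
  exact (Finset.card_le_card hsub).trans (Finset.card_insert_le _ _)

lemma jacoF_mono : Monotone jacoF := by
  refine monotone_nat_of_le_succ fun j => ?_
  rcases Nat.eq_zero_or_pos j with rfl | hj
  · simp [jacoF]
  · have := jacoDin_add_jacoF hj
    have := jacoDin_add_jacoF (Nat.le_add_left 1 j)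
    have := jacoDin_succ_le j
    omega

lemma jacoDeg_eq_min {n j : ℕ} (hj : 1 ≤ j) (hjn : j ≤ n) :
    jacoDeg n j = min j (n - jacoF j) := by
  have hout : (Finset.Ioc j n).filter (fun k => k ≤ j + jacoF j)
      = Finset.Ioc j (min n (j + jacoF j)) := by
    ext k
    simp only [Finset.mem_filter, Finset.mem_Ioc]
    omega
  have := jacoDin_add_jacoF hj
  rw [jacoDeg, hout, Nat.card_Ioc]
  omega

lemma jacoDeg_le_self {n j : ℕ} (hj : 1 ≤ j) (hjn : j ≤ n) : jacoDeg n j ≤ j :=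
  (jacoDeg_eq_min hj hjn).trans_le (min_le_left _ _)

lemma jacoDeg_le_of_add_jacoF_eq {n i j : ℕ} (hi : i + jacoF i = n) (hj : 1 ≤ j)
    (hjn : j ≤ n) : jacoDeg n j ≤ i := by
  rw [jacoDeg_eq_min hj hjn]
  rcases le_total j i with hji | hij
  · exact (min_le_left _ _).trans hji
  · have := jacoF_mono hij
    exact (min_le_right _ _).trans (by omega)

theorem stmt_0_general (n i : ℕ) (hi1 : 1 ≤ i) (hin : i ≤ n)
    (hdeg : jacoDeg n i = i)
    (harc : n ≤ i + jacoF i) :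
    jacoDelta n = i ∧ i ∈ jacoJ n ∧ ∀ j ∈ jacoJ n, i ≤ j := by
  have hreach : i + jacoF i = n := by
    rw [jacoDeg_eq_min hi1 hin] at hdeg
    omega
  have hdelta : jacoDelta n = i := by
    refine le_antisymm (Finset.sup_le fun j hj => ?_) ?_
    · rw [Finset.mem_Icc] at hj
      exact jacoDeg_le_of_add_jacoF_eq hreach hj.1 hj.2
    · exact hdeg ▸ Finset.le_sup (Finset.mem_Icc.mpr ⟨hi1, hin⟩)
  refine ⟨hdelta, ?_, fun j hj => ?_⟩
  · simp only [jacoJ, Finset.mem_filter, Finset.mem_Icc, hdeg, hdelta]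
    exact ⟨⟨hi1, hin⟩, trivial⟩
  · simp only [jacoJ, Finset.mem_filter, Finset.mem_Icc, hdelta] at hj
    obtain ⟨⟨hj1, hjn⟩, hji⟩ := hj
    exact hji ▸ jacoDeg_le_self hj1 hjn

/-- If `i` is the least index in `{1, …, n}` with `d_n(i) = i` and the arc `(v_i, v_n)`
is present in `J_n(1)` (i.e. `n ≤ i + f i`), then `v_i` is the prime Jaconian vertex of
`J_n(1)`: `Δ(J_n(1)) = i` and `i` is the least element of `𝕁(J_n(1))`. -/
theorem stmt_0 (n i : ℕ) (hn : 2 ≤ n) (hi1 : 1 ≤ i) (hin : i ≤ n)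
    (hdeg : jacoDeg n i = i)
    (hleast : ∀ j, 1 ≤ j → j ≤ n → jacoDeg n j = j → i ≤ j)
    (harc : n ≤ i + jacoF i) :
    jacoDelta n = i ∧ i ∈ jacoJ n ∧ ∀ j ∈ jacoJ n, i ≤ j :=
  stmt_0_general n i hi1 hin hdeg harc
end

section
/- Let n ≥ 1 and suppose Δ(J_n(1)) = k. Then for every j with k < j ≤ n, the out-degree of v_j within J_n(1) equals n − j; that is, #{m : j < m ≤ n and m ≤ j + f(j)} = n − j (equivalently, n ≤ j + f(j)). -/
/- If `j + f j < n`, then all `f j` out-neighbours of `v_j` lie in `J_n(1)`, so its degree there is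
`d⁻(j) + f(j) = j`; this exceeds `Δ(J_n(1))` whenever `j > Δ(J_n(1))`. Hence `n ≤ j + f j`, and then
the out-neighbours of `v_j` in `J_n(1)` are exactly `v_{j+1}, …, v_n`. -/

lemma card_filter_Ioc_le_add (j n c : ℕ) :
    ((Finset.Ioc j n).filter (fun m => m ≤ j + c)).card = min n (j + c) - j := by
  have : (Finset.Ioc j n).filter (fun m => m ≤ j + c) = Finset.Ioc j (min n (j + c)) := by
    ext m
    simp only [Finset.mem_filter, Finset.mem_Ioc, le_min_iff]
    tauto
  rw [this, Nat.card_Ioc]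

lemma jacoDin_le_sub_one (j : ℕ) : jacoDin j ≤ j - 1 :=
  (Finset.card_filter_le _ _).trans (Nat.card_Ico 1 j).le

lemma jacoF_add_jacoDin {j : ℕ} (hj : 1 ≤ j) : jacoF j + jacoDin j = j := by
  obtain ⟨m, rfl⟩ := Nat.exists_eq_add_of_le' hj
  have hin : ((Finset.range (m + 1)).attach.filter
      (fun a => 1 ≤ a.1 ∧ m + 1 ≤ a.1 + jacoF a.1)).card = jacoDin (m + 1) := by
    rw [Finset.filter_attach (fun i => 1 ≤ i ∧ m + 1 ≤ i + jacoF i), Finset.card_map,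
      Finset.card_attach, jacoDin]
    congr 1
    ext i
    simp only [Finset.mem_filter, Finset.mem_range, Finset.mem_Ico]
    omega
  have := jacoDin_le_sub_one (m + 1)
  rw [jacoF, hin]
  omega

lemma jacoDeg_eq_self_of_add_jacoF_le {n j : ℕ} (hj : 1 ≤ j) (h : j + jacoF j ≤ n) :
    jacoDeg n j = j := by
  have := jacoF_add_jacoDin hj
  rw [jacoDeg, card_filter_Ioc_le_add, min_eq_right h]
  omega

lemma jacoDeg_le_jacoDelta {n j : ℕ} (hj : 1 ≤ j) (hjn : j ≤ n) : jacoDeg n j ≤ jacoDelta n :=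
  Finset.le_sup (Finset.mem_Icc.mpr ⟨hj, hjn⟩)

theorem stmt_15_general (n k : ℕ) (hk : jacoDelta n = k) :
    ∀ j, k < j → j ≤ n →
      ((Finset.Ioc j n).filter (fun m => m ≤ j + jacoF j)).card = n - j ∧
        n ≤ j + jacoF j := by
  intro j hkj hjn
  have hj : 1 ≤ j := by omega
  have hreach : n ≤ j + jacoF j := by
    by_contra! hlt
    have hdeg := jacoDeg_eq_self_of_add_jacoF_le hj hlt.le
    have := jacoDeg_le_jacoDelta hj hjn
    omega
  refine ⟨?_, hreach⟩
  rw [card_filter_Ioc_le_add, min_eq_left hreach]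

/-- If `Δ(J_n(1)) = k`, then for every `j` with `k < j ≤ n` the out-degree of `v_j`
within `J_n(1)` equals `n - j`; equivalently `n ≤ j + f j`. -/
theorem stmt_15 (n k : ℕ) (hn : 1 ≤ n) (hk : jacoDelta n = k) :
    ∀ j, k < j → j ≤ n →
      ((Finset.Ioc j n).filter (fun m => m ≤ j + jacoF j)).card = n - j ∧
        n ≤ j + jacoF j :=
  stmt_15_general n k hk
end

section
/- (Bettina's Theorem) Let r ≥ 1 and let i_1 > i_2 > … > i_r ≥ 2 be indices with i_j ≥ i_{j+1} + 2 for all 1 ≤ j < r (so that n = fib(i_1) + fib(i_2) + … + fib(i_r) is the Zeckendorf representation of n). Then the out-degree of v_n in J_∞(1) is f(n) = fib(i_1 − 1) + fib(i_2 − 1) + … + fib(i_r − 1). -/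
/-!
Let `s n` be the sum of `fib (k - 1)` over the Zeckendorf indices `k` of `n` (`zeckShift`).
Splitting off the largest Fibonacci summand, `s (fib (m + 2) + t) = fib (m + 1) + s t` for
`t < fib (m + 1)`; induction along this decomposition shows that `s` is monotone and that
`s n + s (s n - 1) ≤ n ≤ s n + s (s n)`. Together these give `s n ≤ k ↔ n ≤ k + s k`, so the
`k < n` with `n ≤ k + s k` are exactly those in `[s n, n)` and `s` satisfies the recursion that
defines `f`. Hence `f = s`, and by uniqueness of Zeckendorf representations `s` sends
`∑ fib (i j)` to `∑ fib (i j - 1)`.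
-/

open Finset

namespace Nat

theorem greatestFib_fib_add {m t : ℕ} (ht : t < fib (m + 1)) :
    greatestFib (fib (m + 2) + t) = m + 2 := by
  have hfib : fib (m + 3) = fib (m + 1) + fib (m + 2) := fib_add_two
  have hlt : fib (m + 2) + t < fib (m + 3) := by omega
  exact le_antisymm (Nat.lt_succ_iff.1 (greatestFib_lt.2 hlt)) (le_greatestFib.2 le_self_add)

theorem exists_eq_fib_add {n : ℕ} (hn : n ≠ 0) :
    ∃ m t, t < fib (m + 1) ∧ n = fib (m + 2) + t := by
  have h2 : 2 ≤ greatestFib n := le_greatestFib.2 (Nat.one_le_iff_ne_zero.2 hn)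
  obtain ⟨m, hm⟩ : ∃ m, greatestFib n = m + 2 := ⟨greatestFib n - 2, by omega⟩
  have hle := fib_greatestFib_le n
  have hlt := lt_fib_greatestFib_add_one n
  have hfib : fib (m + 2 + 1) = fib (m + 1) + fib (m + 2) := fib_add_two
  rw [hm] at hle hlt
  exact ⟨m, n - fib (m + 2), by omega, by omega⟩

@[elab_as_elim]
theorem fib_add_induction {P : ℕ → Prop} (zero : P 0)
    (fib_add : ∀ m t, t < fib (m + 1) → P t → P (fib (m + 2) + t)) (n : ℕ) : P n := by
  induction n using Nat.strong_induction_on with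
  | _ n ih =>
    rcases eq_or_ne n 0 with rfl | hn
    · exact zero
    obtain ⟨m, t, ht, rfl⟩ := exists_eq_fib_add hn
    exact fib_add m t ht (ih t (lt_add_of_pos_left t (fib_pos.2 (by omega))))

end Nat

namespace List

theorem sum_map_range {M : Type*} [AddCommMonoid M] (f : ℕ → M) (r : ℕ) :
    ((range r).map f).sum = ∑ j ∈ Finset.range r, f j := by
  rw [Finset.sum_eq_multiset_sum, Finset.range_val, Multiset.range, Multiset.map_coe,
    Multiset.sum_coe]

theorem isZeckendorfRep_map_range {r : ℕ} {i : ℕ → ℕ} (hlast : 2 ≤ i (r - 1))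
    (hgap : ∀ j, j + 1 < r → i (j + 1) + 2 ≤ i j) : ((range r).map i).IsZeckendorfRep := by
  have happend :
      (range r).map i ++ [0] = (range (r + 1)).map fun j => if j < r then i j else 0 := by
    rw [range_succ, map_append]
    simp +contextual
  rw [IsZeckendorfRep, happend, isChain_map, isChain_range_succ]
  intro j hj
  rcases Nat.lt_or_ge (j + 1) r with h | h
  · simpa [h, hj] using hgap j h
  · rw [if_neg (by omega), if_pos hj, show j = r - 1 by omega]
    simpa using hlast

end List

open Nat

def zeckShift (n : ℕ) : ℕ := ((zeckendorf n).map fun k => fib (k - 1)).sum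

@[simp]
theorem zeckShift_zero : zeckShift 0 = 0 := by
  simp [zeckShift]

theorem zeckShift_fib_add {m t : ℕ} (ht : t < fib (m + 1)) :
    zeckShift (fib (m + 2) + t) = fib (m + 1) + zeckShift t := by
  simp [zeckShift, greatestFib_fib_add ht]

theorem zeckShift_sum_fib {l : List ℕ} (hl : l.IsZeckendorfRep) :
    zeckShift (l.map fib).sum = (l.map fun k => fib (k - 1)).sum := by
  rw [zeckShift, zeckendorf_sum_fib hl]

theorem zeckShift_le_fib_of_lt {n m : ℕ} (h : n < fib (m + 1)) : zeckShift n ≤ fib m := by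
  induction n using Nat.fib_add_induction generalizing m with
  | zero => simp
  | fib_add p t ht ih =>
    have hp : p + 2 < m + 1 := (fib_lt_fib le_add_self).1 (by omega)
    rw [zeckShift_fib_add ht]
    calc fib (p + 1) + zeckShift t ≤ fib (p + 1) + fib p := Nat.add_le_add_left (ih ht) _
      _ = fib (p + 2) := by rw [fib_add_two, add_comm]
      _ ≤ fib m := fib_mono (by omega)

theorem zeckShift_monotone : Monotone zeckShift := by
  intro a b hab
  induction b using Nat.fib_add_induction generalizing a with
  | zero => simp [Nat.le_zero.1 hab]
  | fib_add m u hu ih =>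
    rw [zeckShift_fib_add hu]
    rcases Nat.lt_or_ge a (fib (m + 2)) with ha | ha
    · exact (zeckShift_le_fib_of_lt ha).trans le_self_add
    · obtain ⟨t, rfl⟩ := Nat.exists_eq_add_of_le ha
      rw [zeckShift_fib_add (by omega)]
      exact Nat.add_le_add_left (ih (by omega : t ≤ u)) _

theorem le_zeckShift_add_zeckShift_zeckShift (n : ℕ) :
    n ≤ zeckShift n + zeckShift (zeckShift n) := by
  induction n using Nat.fib_add_induction with
  | zero => simp
  | fib_add m t ht ih =>
    have hst : zeckShift t ≤ fib m := zeckShift_le_fib_of_lt ht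
    rw [zeckShift_fib_add ht]
    rcases hst.lt_or_eq with hlt | heq
    · obtain ⟨k, rfl⟩ := Nat.exists_eq_add_one_of_ne_zero (fib_pos.1 (show 0 < fib m by omega)).ne'
      rw [zeckShift_fib_add hlt, fib_add_two (n := k + 1)]
      omega
    · have hsum : fib (m + 1) + fib m = fib (m + 2) := by rw [fib_add_two]; omega
      have hfib : zeckShift (fib (m + 2)) = fib (m + 1) := by
        simpa using zeckShift_fib_add (t := 0) (fib_pos.2 (by omega))
      rw [heq, hsum, hfib]
      omega

theorem zeckShift_add_zeckShift_zeckShift_sub_one_le (n : ℕ) :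
    zeckShift n + zeckShift (zeckShift n - 1) ≤ n := by
  induction n using Nat.fib_add_induction with
  | zero => simp
  | fib_add m t ht ih =>
    have hst : zeckShift t ≤ fib m := zeckShift_le_fib_of_lt ht
    rw [zeckShift_fib_add ht]
    rcases Nat.eq_zero_or_pos (zeckShift t) with h0 | hpos
    · have hpred : zeckShift (fib (m + 1) - 1) ≤ fib m :=
        zeckShift_le_fib_of_lt (Nat.sub_lt (fib_pos.2 m.succ_pos) one_pos)
      rw [h0, add_zero, fib_add_two]
      omega
    · obtain ⟨k, rfl⟩ := Nat.exists_eq_add_one_of_ne_zero (fib_pos.1 (show 0 < fib m by omega)).ne'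
      rw [Nat.add_sub_assoc (show 1 ≤ zeckShift t from hpos), zeckShift_fib_add (by omega),
        fib_add_two (n := k + 1)]
      omega

theorem zeckShift_le_iff {n k : ℕ} : zeckShift n ≤ k ↔ n ≤ k + zeckShift k := by
  constructor
  · intro h
    calc n ≤ zeckShift n + zeckShift (zeckShift n) := le_zeckShift_add_zeckShift_zeckShift n
      _ ≤ k + zeckShift k := Nat.add_le_add h (zeckShift_monotone h)
  · intro h
    by_contra! hk
    have := zeckShift_monotone (Nat.le_sub_one_of_lt hk)
    have := zeckShift_add_zeckShift_zeckShift_sub_one_le n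
    omega

theorem Ico_filter_le_add_zeckShift (n : ℕ) :
    (Ico 1 n).filter (fun k => n ≤ k + zeckShift k) = Ico (zeckShift n) n := by
  have hpos : 0 < n → 0 < zeckShift n := fun hn => by
    by_contra! h0
    have := zeckShift_le_iff.1 h0
    rw [zero_add, zeckShift_zero] at this
    omega
  ext k
  simp only [mem_filter, mem_Ico, ← zeckShift_le_iff]
  constructor
  · omega
  · intro h
    have := hpos (by omega)
    omega

theorem jacoF_eq_sub_card (n : ℕ) :
    jacoF n = n - ((Ico 1 n).filter fun k => n ≤ k + jacoF k).card := by
  cases n with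
  | zero => simp [jacoF]
  | succ n =>
    rw [jacoF, Finset.filter_attach (fun k => 1 ≤ k ∧ n + 1 ≤ k + jacoF k), card_map, card_attach]
    congr 2
    ext k
    simp only [mem_filter, mem_range, mem_Ico]
    tauto

theorem jacoF_eq_zeckShift : jacoF = zeckShift := by
  funext n
  induction n using Nat.strong_induction_on with
  | _ n ih =>
    have hcongr : ((Ico 1 n).filter fun k => n ≤ k + jacoF k) =
        (Ico 1 n).filter fun k => n ≤ k + zeckShift k :=
      filter_congr fun k hk => by rw [ih k (mem_Ico.1 hk).2]
    have hle : zeckShift n ≤ n := zeckShift_le_iff.2 le_self_add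
    rw [jacoF_eq_sub_card, hcongr, Ico_filter_le_add_zeckShift, Nat.card_Ico]
    omega

theorem stmt_17_general (r : ℕ) (i : ℕ → ℕ)
    (hlast : 2 ≤ i (r - 1))
    (hgap : ∀ j, j + 1 < r → i (j + 1) + 2 ≤ i j)
    (n : ℕ) (hn : n = ∑ j ∈ Finset.range r, Nat.fib (i j)) :
    jacoF n = ∑ j ∈ Finset.range r, Nat.fib (i j - 1) := by
  have hrep := List.isZeckendorfRep_map_range hlast hgap
  rw [jacoF_eq_zeckShift, hn, ← List.sum_map_range, ← List.sum_map_range]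
  simpa [Function.comp_def] using zeckShift_sum_fib hrep

/-- (Bettina's Theorem) If `n = fib i₁ + fib i₂ + ⋯ + fib iᵣ` is the Zeckendorf
representation of `n` (indices `i₁ > i₂ > ⋯ > iᵣ ≥ 2`, consecutive indices differing
by at least 2), then `f n = fib (i₁ - 1) + fib (i₂ - 1) + ⋯ + fib (iᵣ - 1)`. -/
theorem stmt_17 (r : ℕ) (hr : 1 ≤ r) (i : ℕ → ℕ)
    (hlast : 2 ≤ i (r - 1))
    (hgap : ∀ j, j + 1 < r → i (j + 1) + 2 ≤ i j)
    (n : ℕ) (hn : n = ∑ j ∈ Finset.range r, Nat.fib (i j)) :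
    jacoF n = ∑ j ∈ Finset.range r, Nat.fib (i j - 1) :=
  stmt_17_general r i hlast hgap n hn
end
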